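/- arXiv:2408.09068 — 2 statements merged into one kernel-verified Lean document; each statement's English description precedes it below -/
import Mathlib

section
/- Every LP-feasible solution (z, y) of the relaxed Formulation 2 has objective value ∑_{q} ∑_{h ∈ H} z q h ≥ 1. (Lower-bound half of Proposition 1.) -/
/-- LP-feasibility for the relaxed Formulation 2 (fixed-length SF BILP). -/
def Form2LPFeasible (n p M : ℕ) (D : Fin n → ℕ) (adj : Fin n → Fin n → Prop)
    (z : Fin p → ℕ → ℝ) (y : Fin p → ℕ → Fin n → ℝ) : Prop :=
  (∀ q : Fin p, ∀ h ∈ Finset.Icc 1 M, 0 ≤ z q h ∧ z q h ≤ 1) ∧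
  (∀ q : Fin p, ∀ h ∈ Finset.Icc 1 M, ∀ b : Fin n, 0 ≤ y q h b ∧ y q h b ≤ 1) ∧
  -- (i) logic constraint
  (∀ q : Fin p, ∀ h ∈ Finset.Icc 1 M, ∀ b : Fin n, y q h b ≤ z q h) ∧
  -- (ii) one dwell time per pattern
  (∀ q : Fin p, ∑ h ∈ Finset.Icc 1 M, z q h ≤ 1) ∧
  -- (iii) demand constraint
  (∀ b : Fin n, ∑ q : Fin p, ∑ h ∈ Finset.Icc 1 M, (h : ℝ) * y q h b = (D b : ℝ)) ∧
  -- (iv) adjacent-beam interference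
  (∀ q : Fin p, ∀ h ∈ Finset.Icc 1 M, ∀ b b' : Fin n, adj b b' → y q h b + y q h b' ≤ 1)

/-! Beam `b` receives `∑ h · y q h b ≤ M · ∑ z q h` units of demand, since each weight is at
most `M` and `y ≤ z`; a beam of demand exactly `M` therefore forces the objective up to `1`. -/

open Finset

theorem sum_mul_le_mul_sum_of_le {ι : Type*} (s : Finset ι) {w y z : ι → ℝ} {M : ℝ}
    (hM : 0 ≤ M) (hw : ∀ i ∈ s, w i ≤ M) (hy : ∀ i ∈ s, 0 ≤ y i)
    (hyz : ∀ i ∈ s, y i ≤ z i) :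
    ∑ i ∈ s, w i * y i ≤ M * ∑ i ∈ s, z i := by
  rw [mul_sum]
  exact sum_le_sum fun i hi =>
    (mul_le_mul_of_nonneg_right (hw i hi) (hy i hi)).trans
      (mul_le_mul_of_nonneg_left (hyz i hi) hM)

theorem Form2LPFeasible.demand_le_mul_objective {n p M : ℕ} {D : Fin n → ℕ}
    {adj : Fin n → Fin n → Prop} {z : Fin p → ℕ → ℝ} {y : Fin p → ℕ → Fin n → ℝ}
    (hfeas : Form2LPFeasible n p M D adj z y) (b : Fin n) :
    (D b : ℝ) ≤ M * ∑ q : Fin p, ∑ h ∈ Icc 1 M, z q h := by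
  obtain ⟨-, hy, hyz, -, hdemand, -⟩ := hfeas
  rw [← hdemand b, mul_sum]
  refine sum_le_sum fun q _ => sum_mul_le_mul_sum_of_le _ M.cast_nonneg (fun h hh => ?_)
    (fun h hh => (hy q h hh b).1) (fun h hh => hyz q h hh b)
  exact_mod_cast (mem_Icc.mp hh).2

theorem form2_LP_relaxation_lower_bound_general
    (n p M : ℕ) (hM : 1 ≤ M)
    (D : Fin n → ℕ) (hmax : ∃ bstar : Fin n, D bstar = M)
    (adj : Fin n → Fin n → Prop)
    (z : Fin p → ℕ → ℝ) (y : Fin p → ℕ → Fin n → ℝ)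
    (hfeas : Form2LPFeasible n p M D adj z y) :
    1 ≤ ∑ q : Fin p, ∑ h ∈ Finset.Icc 1 M, z q h := by
  obtain ⟨bstar, hbstar⟩ := hmax
  have hMpos : (0 : ℝ) < M := by exact_mod_cast hM
  have hdemand := hfeas.demand_le_mul_objective bstar
  rw [hbstar] at hdemand
  exact le_of_mul_le_mul_left (by simpa using hdemand) hMpos

/-- Lower-bound half of Proposition 1: every LP-feasible solution of the relaxed
Formulation 2 has objective value at least 1. -/
theorem form2_LP_relaxation_lower_bound
    (n p M : ℕ) (hn : 1 ≤ n) (hp : 2 ≤ p) (hM : 1 ≤ M)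
    (D : Fin n → ℕ) (hD : ∀ b, D b ≤ M) (hmax : ∃ bstar : Fin n, D bstar = M)
    (adj : Fin n → Fin n → Prop) (hadjSymm : Symmetric adj) (hadjIrrefl : Irreflexive adj)
    (z : Fin p → ℕ → ℝ) (y : Fin p → ℕ → Fin n → ℝ)
    (hfeas : Form2LPFeasible n p M D adj z y) :
    1 ≤ ∑ q : Fin p, ∑ h ∈ Finset.Icc 1 M, z q h :=
  form2_LP_relaxation_lower_bound_general n p M hM D hmax adj z y hfeas
end

section
/- There exists an LP-feasible solution (z, y, T, x) of the relaxed Formulation 3 whose objective value ∑_q z q equals exactly 1. (Feasible-construction half of Proposition 2: on two patterns take z q = 1/2, y q b = 1/2 for beams with D b > 0 and 0 otherwise, x q b = (D b) · y q b, and T q = 0.) -/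
/-- LP-feasibility for the relaxed Formulation 3 (flexible-length SF MILP). -/
def Form3LPFeasible (n p M : ℕ) (D : Fin n → ℕ) (adj : Fin n → Fin n → Prop)
    (z : Fin p → ℝ) (y : Fin p → Fin n → ℝ) (T : Fin p → ℝ) (x : Fin p → Fin n → ℝ) : Prop :=
  (∀ q : Fin p, 0 ≤ z q ∧ z q ≤ 1) ∧
  (∀ q : Fin p, ∀ b : Fin n, 0 ≤ y q b ∧ y q b ≤ 1) ∧
  (∀ q : Fin p, 0 ≤ T q) ∧
  (∀ q : Fin p, ∀ b : Fin n, 0 ≤ x q b) ∧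
  -- (i) logic constraint
  (∀ q : Fin p, ∀ b : Fin n, y q b ≤ z q) ∧
  -- (ii) logic constraint on durations
  (∀ q : Fin p, ∀ b : Fin n, x q b ≤ (D b : ℝ) * y q b) ∧
  -- (iii) demand constraint
  (∀ b : Fin n, ∑ q : Fin p, x q b = (D b : ℝ)) ∧
  -- (iv) and (v): equal dwell time within a pattern
  (∀ q : Fin p, ∀ b : Fin n, x q b ≤ T q + (M : ℝ) * (1 - y q b)) ∧
  (∀ q : Fin p, ∀ b : Fin n, T q - (M : ℝ) * (1 - y q b) ≤ x q b) ∧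
  -- (vi) adjacent-beam interference
  (∀ q : Fin p, ∀ b b' : Fin n, adj b b' → y q b + y q b' ≤ 1)

/-- Integer feasibility for Formulation 3: LP-feasible with binary `z` and `y`. -/
def Form3IntFeasible (n p M : ℕ) (D : Fin n → ℕ) (adj : Fin n → Fin n → Prop)
    (z : Fin p → ℝ) (y : Fin p → Fin n → ℝ) (T : Fin p → ℝ) (x : Fin p → Fin n → ℝ) : Prop :=
  Form3LPFeasible n p M D adj z y T x ∧
  (∀ q : Fin p, z q = 0 ∨ z q = 1) ∧
  (∀ q : Fin p, ∀ b : Fin n, y q b = 0 ∨ y q b = 1)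

/-
Spread every demand evenly over all `p` patterns: `z q = y q b = 1/p`, `x q b = D b / p`,
`T q = 0`. The demands are met and `∑ z = 1`. Since `p ≥ 2`, `1/p ≤ 1/2`, which gives the
interference constraint, and `D b / p ≤ M / p ≤ M (1 - 1/p)` gives the dwell-time constraint;
the big-`M` slack makes the lower dwell-time bound trivial with `T = 0`.
-/

lemma inv_natCast_le_half {p : ℕ} (hp : 2 ≤ p) : (p : ℝ)⁻¹ ≤ 1 / 2 := by
  rw [one_div]
  exact inv_anti₀ two_pos (by exact_mod_cast hp)

lemma sum_fin_mul_inv_natCast {p : ℕ} (hp : p ≠ 0) (c : ℝ) :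
    ∑ _q : Fin p, c * (p : ℝ)⁻¹ = c := by
  rw [Finset.sum_const, Finset.card_univ, Fintype.card_fin, nsmul_eq_mul]
  field_simp

lemma form3LPFeasible_uniform {n p M : ℕ} (hp : 2 ≤ p) {D : Fin n → ℕ} (hD : ∀ b, D b ≤ M)
    (adj : Fin n → Fin n → Prop) :
    Form3LPFeasible n p M D adj (fun _ => (p : ℝ)⁻¹) (fun _ _ => (p : ℝ)⁻¹) (fun _ => 0)
      (fun _ b => D b * (p : ℝ)⁻¹) := by
  have hp0 : p ≠ 0 := by omega
  have hinv_pos : 0 < (p : ℝ)⁻¹ := by positivity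
  have hinv_half := inv_natCast_le_half hp
  have hinv_le_one : (p : ℝ)⁻¹ ≤ 1 := by linarith
  refine ⟨fun _ => ⟨hinv_pos.le, hinv_le_one⟩, fun _ _ => ⟨hinv_pos.le, hinv_le_one⟩,
    fun _ => le_rfl, fun _ _ => by positivity, fun _ _ => le_rfl, fun _ _ => le_rfl,
    fun b => sum_fin_mul_inv_natCast hp0 _, fun _ b => ?_, fun _ b => ?_,
    fun _ _ _ _ => by linarith⟩
  · have hDM : (D b : ℝ) ≤ M := by exact_mod_cast hD b
    calc (D b : ℝ) * (p : ℝ)⁻¹ ≤ M * (p : ℝ)⁻¹ := by gcongr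
      _ ≤ M * (1 - (p : ℝ)⁻¹) := by gcongr; linarith
      _ = 0 + M * (1 - (p : ℝ)⁻¹) := (zero_add _).symm
  · have hslack : 0 ≤ (M : ℝ) * (1 - (p : ℝ)⁻¹) := mul_nonneg (Nat.cast_nonneg M) (by linarith)
    have hx_nonneg : 0 ≤ (D b : ℝ) * (p : ℝ)⁻¹ := by positivity
    linarith

theorem form3_LP_relaxation_achieves_one_general
    (n p M : ℕ) (hp : 2 ≤ p)
    (D : Fin n → ℕ) (hD : ∀ b, D b ≤ M)
    (adj : Fin n → Fin n → Prop) :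
    ∃ (z : Fin p → ℝ) (y : Fin p → Fin n → ℝ) (T : Fin p → ℝ) (x : Fin p → Fin n → ℝ),
      Form3LPFeasible n p M D adj z y T x ∧ ∑ q : Fin p, z q = 1 := by
  have hsum : ∑ _q : Fin p, (p : ℝ)⁻¹ = 1 := by
    simpa using sum_fin_mul_inv_natCast (p := p) (by omega) 1
  exact ⟨_, _, _, _, form3LPFeasible_uniform hp hD adj, hsum⟩

/-- Feasible-construction half of Proposition 2: there is an LP-feasible solution of the
relaxed Formulation 3 with objective value exactly 1. -/
theorem form3_LP_relaxation_achieves_one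
    (n p M : ℕ) (hn : 1 ≤ n) (hp : 2 ≤ p) (hM : 1 ≤ M)
    (D : Fin n → ℕ) (hD : ∀ b, D b ≤ M)
    (adj : Fin n → Fin n → Prop) (hadjSymm : Symmetric adj) (hadjIrrefl : Irreflexive adj) :
    ∃ (z : Fin p → ℝ) (y : Fin p → Fin n → ℝ) (T : Fin p → ℝ) (x : Fin p → Fin n → ℝ),
      Form3LPFeasible n p M D adj z y T x ∧ ∑ q : Fin p, z q = 1 :=
  form3_LP_relaxation_achieves_one_general n p M hp D hD adj
end
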